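/- Assume α < βσ < 2α and λ ∈ ((βσ-α)/α, 1). Then λ²α/σ + (1-λ)β < α/σ. Consequently, the mixed objective L^m with perturbation variance σ/λ (which is min{λ²α/σ + (1-λ)β, β}-smooth) has a smaller smoothness constant than L^Bayes with variance σ (which is α/σ-smooth). -/
import Mathlib

/-- Lemma 1 of the paper: assume `α < βσ < 2α` and `λ ∈ ((βσ-α)/α, 1)`.
Then `λ²α/σ + (1-λ)β < α/σ`; consequently the smoothness constant
`min{λ²α/σ + (1-λ)β, β}` of the mixed objective `L^m` with perturbation variance
`σ/λ` is smaller than the smoothness constant `α/σ` of `L^Bayes` with variance `σ`. -/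
theorem stmt_2 (α β σ lam : ℝ) (hα : 0 < α) (hβ : 0 < β) (hσ : 0 < σ)
    (h1 : α < β * σ) (h2 : β * σ < 2 * α)
    (hlamlo : (β * σ - α) / α < lam) (hlamhi : lam < 1) :
    lam ^ 2 * α / σ + (1 - lam) * β < α / σ ∧
    min (lam ^ 2 * α / σ + (1 - lam) * β) β < α / σ := by
  have hl : β * σ - α < lam * α := by
    have := (div_lt_iff₀ hα).mp hlamlo; linarith
  have key : lam ^ 2 * α / σ + (1 - lam) * β < α / σ := by
    rw [div_add' _ _ _ hσ.ne', div_lt_div_iff₀ hσ hσ]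
    nlinarith [mul_lt_mul_of_pos_left hl (sub_pos.mpr hlamhi), mul_pos hσ hσ, hσ.le]
  exact ⟨key, lt_of_le_of_lt (min_le_left _ _) key⟩
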